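/- arXiv:2603.12325 — 6 statements merged into one kernel-verified Lean document; each statement's English description precedes it below -/
import Mathlib

section
/- Let ι be a finite nonempty index type, let M : ι → ι → ℝ have all entries strictly positive, and let β ≥ 1. Then the EVE operator T is monotone (order-preserving): for all strictly positive vectors u, v : ι → ℝ with u_i ≤ v_i for every i, one has T(u)_j ≤ T(v)_j for every j. -/
open Finset Real

/-- `S(u) i = ∑ k, u k * M k i`. -/
noncomputable def eveS {ι : Type*} [Fintype ι] (M : ι → ι → ℝ) (u : ι → ℝ) : ι → ℝ :=
  fun i => ∑ k, u k * M k i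

/-- The EVE operator
`T(u) j = ( S(u) j ^ (1/β) / (∑ i, M j i * u i ^ (-1/β) * S(u) i ^ ((1-β)/β)) ) ^ (β/(1+β))`,
where all powers are real powers. -/
noncomputable def eveT {ι : Type*} [Fintype ι] (M : ι → ι → ℝ) (β : ℝ) (u : ι → ℝ) : ι → ℝ :=
  fun j => (eveS M u j ^ (1 / β) /
      ∑ i, M j i * u i ^ (-1 / β) * eveS M u i ^ ((1 - β) / β)) ^ (β / (1 + β))

/-- for `β ≥ 1` the EVE operator is monotone (order-preserving):
for all strictly positive vectors `u, v` with `u ≤ v` pointwise,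
`T(u) j ≤ T(v) j` for every `j`. -/
theorem eveT_monotone {ι : Type*} [Fintype ι] [Nonempty ι]
    (M : ι → ι → ℝ) (hM : ∀ i j, 0 < M i j)
    (β : ℝ) (hβ : 1 ≤ β)
    (u v : ι → ℝ) (hu : ∀ i, 0 < u i) (hv : ∀ i, 0 < v i)
    (huv : ∀ i, u i ≤ v i) :
    ∀ j, eveT M β u j ≤ eveT M β v j := by
  intro j
  have hβ0 : (0:ℝ) < β := lt_of_lt_of_le one_pos hβ
  have hSu : ∀ i, 0 < eveS M u i := fun i =>
    Finset.sum_pos (fun k _ => mul_pos (hu k) (hM k i)) Finset.univ_nonempty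
  have hSv : ∀ i, 0 < eveS M v i := fun i =>
    Finset.sum_pos (fun k _ => mul_pos (hv k) (hM k i)) Finset.univ_nonempty
  have hS : ∀ i, eveS M u i ≤ eveS M v i := fun i =>
    Finset.sum_le_sum fun k _ => mul_le_mul_of_nonneg_right (huv k) (hM k i).le
  have hDpos : (0:ℝ) < ∑ i, M j i * v i ^ (-1 / β) * eveS M v i ^ ((1 - β) / β) :=
    Finset.sum_pos (fun i _ => mul_pos (mul_pos (hM j i)
      (Real.rpow_pos_of_pos (hv i) _)) (Real.rpow_pos_of_pos (hSv i) _)) Finset.univ_nonempty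
  have hD : (∑ i, M j i * v i ^ (-1 / β) * eveS M v i ^ ((1 - β) / β)) ≤
      ∑ i, M j i * u i ^ (-1 / β) * eveS M u i ^ ((1 - β) / β) := by
    refine Finset.sum_le_sum fun i _ => ?_
    have h1 : v i ^ (-1 / β) ≤ u i ^ (-1 / β) :=
      Real.rpow_le_rpow_of_nonpos (hu i) (huv i) (div_nonpos_of_nonpos_of_nonneg (by norm_num) hβ0.le)
    have h2 : eveS M v i ^ ((1 - β) / β) ≤ eveS M u i ^ ((1 - β) / β) :=
      Real.rpow_le_rpow_of_nonpos (hSu i) (hS i)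
        (div_nonpos_of_nonpos_of_nonneg (by linarith) hβ0.le)
    have := mul_le_mul (mul_le_mul_of_nonneg_left h1 (hM j i).le) h2
      (Real.rpow_nonneg (hSv i).le _)
      (mul_nonneg (hM j i).le (Real.rpow_nonneg (hu i).le _))
    exact this
  have hnum : eveS M u j ^ (1 / β) ≤ eveS M v j ^ (1 / β) :=
    Real.rpow_le_rpow (hSu j).le (hS j) (by positivity)
  unfold eveT
  refine Real.rpow_le_rpow (div_nonneg (Real.rpow_nonneg (hSu j).le _) (le_trans hDpos.le hD)) ?_ (by positivity)
  exact div_le_div₀ (Real.rpow_nonneg (hSv j).le _) hnum hDpos hD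
end

section
/- Let ι be a finite nonempty index type, let P : ι → ι → ℝ be entrywise nonnegative with the property that every row has at least one strictly positive entry (for each j there exists i with P_{j i} > 0), let u, v : ι → ℝ be strictly positive vectors, let λ > 0, and let β > 0. Suppose the two self-consistent eigenvector equations hold: for all j, ∑_k u_k · P_{k j} = λ · u_j^{1+β} · v_j^{β}, and for all j, ∑_i P_{j i} · u_i^{−β} · v_i^{1−β} = λ · v_j. Then the right eigenvector can be eliminated and u satisfies the fixed-point equation: for all j, u_j^{(1+β)/β} = ( ∑_k u_k · P_{k j} )^{1/β} / ( ∑_i P_{j i} · u_i^{−1/β} · ( ∑_k u_k · P_{k i} )^{(1−β)/β} ). -/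
open Finset Real

/-- if the strictly positive vectors `u, v` satisfy the self-consistent left- and
right-eigenvector equations of the tilted matrix (with Perron eigenvalue `lam > 0` and inverse
temperature `β > 0`), then the right eigenvector can be eliminated and `u` satisfies the EVE
fixed-point equation. All powers are real powers. -/
theorem eve_fixed_point_of_self_consistent {ι : Type*} [Fintype ι] [Nonempty ι]
    (P : ι → ι → ℝ) (hP : ∀ i j, 0 ≤ P i j) (hProw : ∀ j, ∃ i, 0 < P j i)
    (u v : ι → ℝ) (hu : ∀ i, 0 < u i) (hv : ∀ i, 0 < v i)
    (lam : ℝ) (hlam : 0 < lam) (β : ℝ) (hβ : 0 < β)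
    (hleft : ∀ j, ∑ k, u k * P k j = lam * u j ^ (1 + β) * v j ^ β)
    (hright : ∀ j, ∑ i, P j i * u i ^ (-β) * v i ^ (1 - β) = lam * v j) :
    ∀ j, u j ^ ((1 + β) / β) =
      (∑ k, u k * P k j) ^ (1 / β) /
        ∑ i, P j i * u i ^ (-1 / β) * (∑ k, u k * P k i) ^ ((1 - β) / β) := by
  have hβ' : β ≠ 0 := ne_of_gt hβ
  have hSpos : ∀ j, 0 < ∑ k, u k * P k j := by
    intro j
    rw [hleft j]
    have := hu j; have := hv j
    positivity
  -- v j ^ β in terms of u and the column sums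
  have hvβ : ∀ j, v j ^ β = (∑ k, u k * P k j) * lam⁻¹ * u j ^ (-(1 + β)) := by
    intro j
    rw [hleft j, Real.rpow_neg (hu j).le]
    have h1 : u j ^ (1 + β) ≠ 0 := ne_of_gt (Real.rpow_pos_of_pos (hu j) _)
    field_simp
  set c : ℝ := (1 - β) / β with hc
  -- termwise rewriting
  have hterm : ∀ j i, P j i * u i ^ (-β) * v i ^ (1 - β)
      = lam ^ (-c) * (P j i * u i ^ (-1 / β) * (∑ k, u k * P k i) ^ c) := by
    intro j i
    have h1 : v i ^ (1 - β) = (v i ^ β) ^ c := by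
      rw [← Real.rpow_mul (hv i).le]
      congr 1
      rw [hc]
      field_simp
    rw [h1, hvβ i,
      Real.mul_rpow (mul_nonneg (hSpos i).le (inv_nonneg.mpr hlam.le))
        (Real.rpow_nonneg (hu i).le _),
      Real.mul_rpow (hSpos i).le (inv_nonneg.mpr hlam.le),
      ← Real.rpow_mul (hu i).le,
      Real.inv_rpow hlam.le, ← Real.rpow_neg hlam.le]
    have h2 : u i ^ (-β) * u i ^ (-(1 + β) * c) = u i ^ (-1 / β) := by
      rw [← Real.rpow_add (hu i)]
      congr 1
      rw [hc]
      field_simp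
      ring
    calc P j i * u i ^ (-β) * ((∑ k, u k * P k i) ^ c * lam ^ (-c) * u i ^ (-(1 + β) * c))
        = lam ^ (-c) * (P j i * (u i ^ (-β) * u i ^ (-(1 + β) * c)) * (∑ k, u k * P k i) ^ c) := by
          ring
      _ = _ := by rw [h2]
  -- RHS rewriting
  have hrhs : ∀ j, lam * v j
      = lam ^ (-c) * ((∑ k, u k * P k j) ^ (1 / β) * u j ^ (-((1 + β) / β))) := by
    intro j
    have h1 : v j = (v j ^ β) ^ (1 / β) := by
      rw [← Real.rpow_mul (hv j).le, mul_one_div_cancel hβ', Real.rpow_one]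
    rw [h1, hvβ j,
      Real.mul_rpow (mul_nonneg (hSpos j).le (inv_nonneg.mpr hlam.le))
        (Real.rpow_nonneg (hu j).le _),
      Real.mul_rpow (hSpos j).le (inv_nonneg.mpr hlam.le),
      ← Real.rpow_mul (hu j).le,
      Real.inv_rpow hlam.le, ← Real.rpow_neg hlam.le]
    have h2 : lam * lam ^ (-(1 / β)) = lam ^ (-c) := by
      nth_rewrite 1 [← Real.rpow_one lam]
      rw [← Real.rpow_add hlam]
      congr 1
      rw [hc]
      field_simp
      ring
    have h3 : -(1 + β) * (1 / β) = -((1 + β) / β) := by field_simp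
    rw [h3, ← h2]
    ring
  -- eliminate lam ^ (-c)
  have hD : ∀ j, (∑ i, P j i * u i ^ (-1 / β) * (∑ k, u k * P k i) ^ c)
      = (∑ k, u k * P k j) ^ (1 / β) * u j ^ (-((1 + β) / β)) := by
    intro j
    have h := hright j
    rw [hrhs j] at h
    have h2 : (∑ i, P j i * u i ^ (-β) * v i ^ (1 - β))
        = lam ^ (-c) * ∑ i, P j i * u i ^ (-1 / β) * (∑ k, u k * P k i) ^ c := by
      rw [Finset.mul_sum]
      exact Finset.sum_congr rfl fun i _ => hterm j i
    rw [h2] at h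
    exact mul_left_cancel₀ (ne_of_gt (Real.rpow_pos_of_pos hlam _)) h
  intro j
  rw [hD j, Real.rpow_neg (hu j).le]
  have h1 : (∑ k, u k * P k j) ^ (1 / β) ≠ 0 := ne_of_gt (Real.rpow_pos_of_pos (hSpos j) _)
  have h2 : u j ^ ((1 + β) / β) ≠ 0 := ne_of_gt (Real.rpow_pos_of_pos (hu j) _)
  field_simp
end

section
/- Let ι be a finite nonempty index type, let M : ι → ι → ℝ have all entries strictly positive, let β ≥ 1, and let τ ≥ 0 be such that d_H(S(x), S(y)) ≤ τ · d_H(x, y) for all strictly positive x, y : ι → ℝ, where S(u)_i = ∑_k u_k · M_{k i}. Then the map f defined componentwise by f(u)_i = u_i^{−1/β} · S(u)_i^{(1−β)/β} satisfies d_H(f(x), f(y)) ≤ ( (1 + τ(β − 1)) / β ) · d_H(x, y) for all strictly positive x, y. -/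
open Finset Real

/-- Hilbert projective metric on strictly positive vectors:
`d_H(x,y) = log (max_i x i / y i) - log (min_i x i / y i)`. -/
noncomputable def dH {ι : Type*} [Fintype ι] [Nonempty ι] (x y : ι → ℝ) : ℝ :=
  Real.log (⨆ i, x i / y i) - Real.log (⨅ i, x i / y i)

lemma exists_eq_ciSup_max {ι : Type*} [Fintype ι] [Nonempty ι] (g : ι → ℝ) :
    ∃ i, (⨆ j, g j) = g i ∧ ∀ j, g j ≤ g i := by
  obtain ⟨i, hi⟩ := Finite.exists_max g
  exact ⟨i, le_antisymm (ciSup_le hi) (le_ciSup (Set.Finite.bddAbove (Set.finite_range g)) i), hi⟩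

lemma exists_eq_ciInf_min {ι : Type*} [Fintype ι] [Nonempty ι] (g : ι → ℝ) :
    ∃ i, (⨅ j, g j) = g i ∧ ∀ j, g i ≤ g j := by
  obtain ⟨i, hi⟩ := Finite.exists_min g
  exact ⟨i, le_antisymm (ciInf_le (Set.Finite.bddBelow (Set.finite_range g)) i) (le_ciInf hi), hi⟩

/-- if `S` is a `τ`-contraction in the Hilbert projective metric on strictly
positive vectors, then for `β ≥ 1` the map `f(u) i = u i ^ (-1/β) * S(u) i ^ ((1-β)/β)`
satisfies `d_H(f(x), f(y)) ≤ ((1 + τ(β-1))/β) * d_H(x, y)`. Powers are real powers. -/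
theorem eve_inner_map_contraction {ι : Type*} [Fintype ι] [Nonempty ι]
    (M : ι → ι → ℝ) (hM : ∀ i j, 0 < M i j)
    (β : ℝ) (hβ : 1 ≤ β) (τ : ℝ) (hτ : 0 ≤ τ)
    (hS : ∀ x y : ι → ℝ, (∀ i, 0 < x i) → (∀ i, 0 < y i) →
      dH (eveS M x) (eveS M y) ≤ τ * dH x y) :
    ∀ x y : ι → ℝ, (∀ i, 0 < x i) → (∀ i, 0 < y i) →
      dH (fun i => x i ^ (-1 / β) * eveS M x i ^ ((1 - β) / β))
         (fun i => y i ^ (-1 / β) * eveS M y i ^ ((1 - β) / β)) ≤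
        ((1 + τ * (β - 1)) / β) * dH x y := by
  intro x y hx hy
  have hβ0 : 0 < β := lt_of_lt_of_le one_pos hβ
  set c : ℝ := -1 / β with hc
  set e : ℝ := (1 - β) / β with he
  have hc0 : c ≤ 0 := by
    rw [hc]; apply div_nonpos_of_nonpos_of_nonneg <;> linarith
  have he0 : e ≤ 0 := by
    rw [he]; apply div_nonpos_of_nonpos_of_nonneg <;> linarith
  have hSx : ∀ i, 0 < eveS M x i := fun i =>
    Finset.sum_pos (fun k _ => mul_pos (hx k) (hM k i)) Finset.univ_nonempty
  have hSy : ∀ i, 0 < eveS M y i := fun i =>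
    Finset.sum_pos (fun k _ => mul_pos (hy k) (hM k i)) Finset.univ_nonempty
  set a : ι → ℝ := fun i => x i / y i with ha
  set b : ι → ℝ := fun i => eveS M x i / eveS M y i with hb
  have hapos : ∀ i, 0 < a i := fun i => div_pos (hx i) (hy i)
  have hbpos : ∀ i, 0 < b i := fun i => div_pos (hSx i) (hSy i)
  set r : ι → ℝ := fun i => a i ^ c * b i ^ e with hr
  have hrpos : ∀ i, 0 < r i := fun i =>
    mul_pos (Real.rpow_pos_of_pos (hapos i) c) (Real.rpow_pos_of_pos (hbpos i) e)
  have hratio : ∀ i, (x i ^ c * eveS M x i ^ e) / (y i ^ c * eveS M y i ^ e) = r i := by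
    intro i
    rw [mul_div_mul_comm, hr]
    rw [← Real.div_rpow (hx i).le (hy i).le, ← Real.div_rpow (hSx i).le (hSy i).le]
  obtain ⟨ia, hia, hia'⟩ := exists_eq_ciInf_min a
  obtain ⟨ja, hja, hja'⟩ := exists_eq_ciSup_max a
  obtain ⟨ib, hib, hib'⟩ := exists_eq_ciInf_min b
  obtain ⟨jb, hjb, hjb'⟩ := exists_eq_ciSup_max b
  -- bound sup of r
  have hsupr : (⨆ i, r i) ≤ a ia ^ c * b ib ^ e := by
    apply ciSup_le
    intro i
    exact mul_le_mul (Real.rpow_le_rpow_of_nonpos (hapos ia) (hia' i) hc0)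
      (Real.rpow_le_rpow_of_nonpos (hbpos ib) (hib' i) he0)
      (Real.rpow_pos_of_pos (hbpos i) e).le (Real.rpow_pos_of_pos (hapos ia) c).le
  have hinfr : a ja ^ c * b jb ^ e ≤ ⨅ i, r i := by
    apply le_ciInf
    intro i
    exact mul_le_mul (Real.rpow_le_rpow_of_nonpos (hapos i) (hja' i) hc0)
      (Real.rpow_le_rpow_of_nonpos (hbpos i) (hjb' i) he0)
      (Real.rpow_pos_of_pos (hbpos jb) e).le (Real.rpow_pos_of_pos (hapos i) c).le
  have hsuprpos : 0 < ⨆ i, r i := by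
    obtain ⟨j, hj, _⟩ := exists_eq_ciSup_max r
    rw [hj]; exact hrpos j
  have hlbpos : 0 < a ja ^ c * b jb ^ e :=
    mul_pos (Real.rpow_pos_of_pos (hapos ja) c) (Real.rpow_pos_of_pos (hbpos jb) e)
  have hdHf : dH (fun i => x i ^ c * eveS M x i ^ e) (fun i => y i ^ c * eveS M y i ^ e)
      = Real.log (⨆ i, r i) - Real.log (⨅ i, r i) := by
    unfold dH
    congr 1
    · exact congrArg Real.log (iSup_congr hratio)
    · exact congrArg Real.log (iInf_congr hratio)
  have hlog1 : Real.log (⨆ i, r i) ≤ Real.log (a ia ^ c * b ib ^ e) :=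
    Real.log_le_log hsuprpos hsupr
  have hlog2 : Real.log (a ja ^ c * b jb ^ e) ≤ Real.log (⨅ i, r i) :=
    Real.log_le_log hlbpos hinfr
  have expand : ∀ (p q : ℝ), 0 < p → 0 < q →
      Real.log (p ^ c * q ^ e) = c * Real.log p + e * Real.log q := by
    intro p q hp hq
    rw [Real.log_mul (Real.rpow_pos_of_pos hp c).ne' (Real.rpow_pos_of_pos hq e).ne',
      Real.log_rpow hp, Real.log_rpow hq]
  have hD : dH x y = Real.log (a ja) - Real.log (a ia) := by
    unfold dH; rw [hja, hia]
  have hDS : dH (eveS M x) (eveS M y) = Real.log (b jb) - Real.log (b ib) := by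
    unfold dH; rw [hjb, hib]
  have key : dH (fun i => x i ^ c * eveS M x i ^ e) (fun i => y i ^ c * eveS M y i ^ e)
      ≤ (1 / β) * dH x y + ((β - 1) / β) * dH (eveS M x) (eveS M y) := by
    rw [hdHf, hD, hDS]
    have h1 := expand (a ia) (b ib) (hapos ia) (hbpos ib)
    have h2 := expand (a ja) (b jb) (hapos ja) (hbpos jb)
    have : Real.log (⨆ i, r i) - Real.log (⨅ i, r i)
        ≤ (c * Real.log (a ia) + e * Real.log (b ib))
          - (c * Real.log (a ja) + e * Real.log (b jb)) := by
      rw [← h1, ← h2]; linarith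
    calc Real.log (⨆ i, r i) - Real.log (⨅ i, r i)
        ≤ (c * Real.log (a ia) + e * Real.log (b ib))
          - (c * Real.log (a ja) + e * Real.log (b jb)) := this
      _ = (1 / β) * (Real.log (a ja) - Real.log (a ia))
          + ((β - 1) / β) * (Real.log (b jb) - Real.log (b ib)) := by
          rw [hc, he]; field_simp; ring
  have hcontr := hS x y hx hy
  have hβ1 : 0 ≤ (β - 1) / β := div_nonneg (by linarith) hβ0.le
  calc dH (fun i => x i ^ (-1 / β) * eveS M x i ^ ((1 - β) / β))
         (fun i => y i ^ (-1 / β) * eveS M y i ^ ((1 - β) / β))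
      ≤ (1 / β) * dH x y + ((β - 1) / β) * dH (eveS M x) (eveS M y) := key
    _ ≤ (1 / β) * dH x y + ((β - 1) / β) * (τ * dH x y) := by
        have := mul_le_mul_of_nonneg_left hcontr hβ1
        linarith
    _ = ((1 + τ * (β - 1)) / β) * dH x y := by field_simp
end

section
/- Let ι be a finite nonempty index type, let M : ι → ι → ℝ have all entries strictly positive, let β ≥ 1, and let τ ≥ 0 be such that d_H(S(x), S(y)) ≤ τ · d_H(x, y) and d_H(M x, M y) ≤ τ · d_H(x, y) for all strictly positive x, y : ι → ℝ, where S(u)_i = ∑_k u_k · M_{k i} and (M u)_j = ∑_i M_{j i} · u_i. Then the denominator map D(u)_j = ∑_i M_{j i} · u_i^{−1/β} · S(u)_i^{(1−β)/β} satisfies d_H(D(x), D(y)) ≤ τ · ( (1 + τ(β − 1)) / β ) · d_H(x, y) for all strictly positive x, y. -/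
open Finset Real

section helpers

variable {ι : Type*} [Fintype ι] [Nonempty ι]

lemma my_ciSup_pos {f : ι → ℝ} (hf : ∀ i, 0 < f i) : 0 < ⨆ i, f i := by
  obtain ⟨i, hi⟩ := exists_eq_ciSup_of_finite (f := f)
  exact hi ▸ hf i

lemma my_ciInf_pos {f : ι → ℝ} (hf : ∀ i, 0 < f i) : 0 < ⨅ i, f i := by
  obtain ⟨i, hi⟩ := exists_eq_ciInf_of_finite (f := f)
  exact hi ▸ hf i

lemma my_ciSup_rpow {f : ι → ℝ} (hf : ∀ i, 0 < f i) {a : ℝ} (ha : a ≤ 0) :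
    (⨆ i, f i ^ a) = (⨅ i, f i) ^ a := by
  refine le_antisymm (ciSup_le fun i => ?_) ?_
  · exact Real.rpow_le_rpow_of_nonpos (my_ciInf_pos hf)
      (ciInf_le (Set.finite_range f).bddBelow i) ha
  · obtain ⟨i, hi⟩ := exists_eq_ciInf_of_finite (f := f)
    rw [← hi]
    exact le_ciSup (Set.finite_range fun i => f i ^ a).bddAbove i

lemma my_ciInf_rpow {f : ι → ℝ} (hf : ∀ i, 0 < f i) {a : ℝ} (ha : a ≤ 0) :
    (⨅ i, f i ^ a) = (⨆ i, f i) ^ a := by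
  refine le_antisymm ?_ (le_ciInf fun i => ?_)
  · obtain ⟨i, hi⟩ := exists_eq_ciSup_of_finite (f := f)
    rw [← hi]
    exact ciInf_le (Set.finite_range fun i => f i ^ a).bddBelow i
  · exact Real.rpow_le_rpow_of_nonpos (hf i)
      (le_ciSup (Set.finite_range f).bddAbove i) ha

/-- `dH (x^a) (y^a) = -a * dH x y` for `a ≤ 0`. -/
lemma dH_rpow {x y : ι → ℝ} (hx : ∀ i, 0 < x i) (hy : ∀ i, 0 < y i)
    {a : ℝ} (ha : a ≤ 0) :
    dH (fun i => x i ^ a) (fun i => y i ^ a) = -a * dH x y := by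
  have hr : ∀ i, 0 < x i / y i := fun i => div_pos (hx i) (hy i)
  have hratio : ∀ i, x i ^ a / y i ^ a = (x i / y i) ^ a := fun i =>
    (Real.div_rpow (hx i).le (hy i).le a).symm
  unfold dH
  simp only [hratio]
  rw [my_ciSup_rpow hr ha, my_ciInf_rpow hr ha,
    Real.log_rpow (my_ciInf_pos hr), Real.log_rpow (my_ciSup_pos hr)]
  ring

/-- `dH (u*v) (u'*v') ≤ dH u u' + dH v v'`. -/
lemma dH_mul {u v u' v' : ι → ℝ} (hu : ∀ i, 0 < u i) (hv : ∀ i, 0 < v i)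
    (hu' : ∀ i, 0 < u' i) (hv' : ∀ i, 0 < v' i) :
    dH (fun i => u i * v i) (fun i => u' i * v' i) ≤ dH u u' + dH v v' := by
  set r : ι → ℝ := fun i => u i / u' i with hrdef
  set s : ι → ℝ := fun i => v i / v' i with hsdef
  have hr : ∀ i, 0 < r i := fun i => div_pos (hu i) (hu' i)
  have hs : ∀ i, 0 < s i := fun i => div_pos (hv i) (hv' i)
  have hratio : ∀ i, u i * v i / (u' i * v' i) = r i * s i := fun i =>
    (div_mul_div_comm (u i) (u' i) (v i) (v' i)).symm
  have hrs : ∀ i, 0 < r i * s i := fun i => mul_pos (hr i) (hs i)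
  have hsup : (⨆ i, r i * s i) ≤ (⨆ i, r i) * (⨆ i, s i) :=
    ciSup_le fun i => mul_le_mul (le_ciSup (Set.finite_range r).bddAbove i)
      (le_ciSup (Set.finite_range s).bddAbove i) (hs i).le (my_ciSup_pos hr).le
  have hinf : (⨅ i, r i) * (⨅ i, s i) ≤ ⨅ i, r i * s i :=
    le_ciInf fun i => mul_le_mul (ciInf_le (Set.finite_range r).bddBelow i)
      (ciInf_le (Set.finite_range s).bddBelow i) (my_ciInf_pos hs).le (hr i).le
  unfold dH
  simp only [hratio]
  have h1 : Real.log (⨆ i, r i * s i) ≤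
      Real.log (⨆ i, r i) + Real.log (⨆ i, s i) := by
    rw [← Real.log_mul (my_ciSup_pos hr).ne' (my_ciSup_pos hs).ne']
    exact Real.log_le_log (my_ciSup_pos hrs) hsup
  have h2 : Real.log (⨅ i, r i) + Real.log (⨅ i, s i) ≤
      Real.log (⨅ i, r i * s i) := by
    rw [← Real.log_mul (my_ciInf_pos hr).ne' (my_ciInf_pos hs).ne']
    exact Real.log_le_log (mul_pos (my_ciInf_pos hr) (my_ciInf_pos hs)) hinf
  linarith

end helpers

/-- if both `S` and `u ↦ M u` are `τ`-contractions in the Hilbert projective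
metric on strictly positive vectors, then for `β ≥ 1` the denominator map
`D(u) j = ∑ i, M j i * u i ^ (-1/β) * S(u) i ^ ((1-β)/β)` satisfies
`d_H(D(x), D(y)) ≤ τ * ((1 + τ(β-1))/β) * d_H(x, y)`. Powers are real powers. -/

theorem eve_denominator_contraction {ι : Type*} [Fintype ι] [Nonempty ι]
    (M : ι → ι → ℝ) (hM : ∀ i j, 0 < M i j)
    (β : ℝ) (hβ : 1 ≤ β) (τ : ℝ) (hτ : 0 ≤ τ)
    (hS : ∀ x y : ι → ℝ, (∀ i, 0 < x i) → (∀ i, 0 < y i) →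
      dH (eveS M x) (eveS M y) ≤ τ * dH x y)
    (hMap : ∀ x y : ι → ℝ, (∀ i, 0 < x i) → (∀ i, 0 < y i) →
      dH (fun j => ∑ i, M j i * x i) (fun j => ∑ i, M j i * y i) ≤ τ * dH x y) :
    ∀ x y : ι → ℝ, (∀ i, 0 < x i) → (∀ i, 0 < y i) →
      dH (fun j => ∑ i, M j i * x i ^ (-1 / β) * eveS M x i ^ ((1 - β) / β))
         (fun j => ∑ i, M j i * y i ^ (-1 / β) * eveS M y i ^ ((1 - β) / β)) ≤
        τ * ((1 + τ * (β - 1)) / β) * dH x y := by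
  intro x y hx hy
  have hβ0 : 0 < β := lt_of_lt_of_le one_pos hβ
  have hSx : ∀ i, 0 < eveS M x i := fun i =>
    Finset.sum_pos (fun k _ => mul_pos (hx k) (hM k i)) Finset.univ_nonempty
  have hSy : ∀ i, 0 < eveS M y i := fun i =>
    Finset.sum_pos (fun k _ => mul_pos (hy k) (hM k i)) Finset.univ_nonempty
  set wx : ι → ℝ := fun i => x i ^ (-1 / β) * eveS M x i ^ ((1 - β) / β) with hwx
  set wy : ι → ℝ := fun i => y i ^ (-1 / β) * eveS M y i ^ ((1 - β) / β) with hwy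
  have hwxp : ∀ i, 0 < wx i := fun i =>
    mul_pos (Real.rpow_pos_of_pos (hx i) _) (Real.rpow_pos_of_pos (hSx i) _)
  have hwyp : ∀ i, 0 < wy i := fun i =>
    mul_pos (Real.rpow_pos_of_pos (hy i) _) (Real.rpow_pos_of_pos (hSy i) _)
  have hrw : ∀ (u : ι → ℝ) (w : ι → ℝ), (∀ i, w i = u i) →
      True := fun _ _ _ => trivial
  have key1 :
      dH (fun j => ∑ i, M j i * x i ^ (-1 / β) * eveS M x i ^ ((1 - β) / β))
         (fun j => ∑ i, M j i * y i ^ (-1 / β) * eveS M y i ^ ((1 - β) / β))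
      = dH (fun j => ∑ i, M j i * wx i) (fun j => ∑ i, M j i * wy i) := by
    simp only [hwx, hwy, mul_assoc]
  rw [key1]
  have step1 : dH (fun j => ∑ i, M j i * wx i) (fun j => ∑ i, M j i * wy i) ≤
      τ * dH wx wy := hMap wx wy hwxp hwyp
  have ha : (-1 / β : ℝ) ≤ 0 := div_nonpos_of_nonpos_of_nonneg (by norm_num) hβ0.le
  have hb : ((1 - β) / β : ℝ) ≤ 0 :=
    div_nonpos_of_nonpos_of_nonneg (by linarith) hβ0.le
  have step2 : dH wx wy ≤
      dH (fun i => x i ^ (-1 / β)) (fun i => y i ^ (-1 / β)) +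
      dH (fun i => eveS M x i ^ ((1 - β) / β)) (fun i => eveS M y i ^ ((1 - β) / β)) :=
    dH_mul (fun i => Real.rpow_pos_of_pos (hx i) _)
      (fun i => Real.rpow_pos_of_pos (hSx i) _)
      (fun i => Real.rpow_pos_of_pos (hy i) _)
      (fun i => Real.rpow_pos_of_pos (hSy i) _)
  rw [dH_rpow hx hy ha, dH_rpow hSx hSy hb] at step2
  have step3 : dH (eveS M x) (eveS M y) ≤ τ * dH x y := hS x y hx hy
  have hc : (0 : ℝ) ≤ -((1 - β) / β) := by linarith
  have step4 : -((1 - β) / β) * dH (eveS M x) (eveS M y) ≤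
      -((1 - β) / β) * (τ * dH x y) := mul_le_mul_of_nonneg_left step3 hc
  have step5 : dH wx wy ≤ (1 / β) * dH x y + ((β - 1) / β) * (τ * dH x y) := by
    have e1 : -(-1 / β) = (1 / β : ℝ) := by ring
    have e2 : -((1 - β) / β) = ((β - 1) / β : ℝ) := by ring
    rw [e1, e2] at step2
    rw [e2] at step4
    linarith
  calc dH (fun j => ∑ i, M j i * wx i) (fun j => ∑ i, M j i * wy i)
      ≤ τ * dH wx wy := step1
    _ ≤ τ * ((1 / β) * dH x y + ((β - 1) / β) * (τ * dH x y)) :=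
        mul_le_mul_of_nonneg_left step5 hτ
    _ = τ * ((1 + τ * (β - 1)) / β) * dH x y := by field_simp
end

section
/- Let ι be a finite nonempty index type, let M : ι → ι → ℝ have all entries strictly positive, let β ≥ 1, and let τ with 0 ≤ τ < 1 be such that d_H(S(x), S(y)) ≤ τ · d_H(x, y) and d_H(M x, M y) ≤ τ · d_H(x, y) for all strictly positive x, y : ι → ℝ, where S(u)_i = ∑_k u_k · M_{k i} and (M u)_j = ∑_i M_{j i} · u_i. Then there exists a strictly positive vector u* : ι → ℝ and a real c > 0 with T(u*) = c • u*; the vector u* is unique up to multiplication by a positive scalar (any strictly positive w with T(w) = c' • w for some c' > 0 satisfies w = a • u* for some a > 0); and for every strictly positive x and every n ∈ ℕ, d_H(T^n(x), u*) ≤ ( (2τ + τ²(β − 1)) / (1 + β) )^n · d_H(x, u*), so the iterates of T converge linearly in the Hilbert projective metric to u*. -/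
open Finset Real

/-! `dH x y` is the oscillation (max minus min) of `log x - log y`. Hence multiplying vectors
adds oscillations, a real power `x ^ α` scales them by `|α|`, and positive scalars do not change
them; the EVE operator, assembled from `S`, `u ↦ M u`, products, quotients and powers, therefore
contracts `dH` by `(2τ + τ²(β - 1)) / (1 + β) < 1`. The orbit of a `dH`-contraction with constant
`κ < 1` is Cauchy in the coordinates `log x i - log x i₀`, which forget the scale; its limit is a
projective fixed point, which is unique and attracts every orbit at rate `κ`. -/

open Filter Topology

section HilbertMetric

variable {ι : Type*} [Fintype ι] [Nonempty ι] {x y z w : ι → ℝ}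

theorem dH_le_iff (hx : ∀ i, 0 < x i) (hy : ∀ i, 0 < y i) {r : ℝ} :
    dH x y ≤ r ↔ ∀ i j, log (x i) - log (y i) - (log (x j) - log (y j)) ≤ r := by
  have hlog : ∀ i, log (x i / y i) = log (x i) - log (y i) :=
    fun i => log_div (hx i).ne' (hy i).ne'
  obtain ⟨i₁, hi₁⟩ := exists_eq_ciSup_of_finite (f := fun i => x i / y i)
  obtain ⟨i₂, hi₂⟩ := exists_eq_ciInf_of_finite (f := fun i => x i / y i)
  have hdH : dH x y = log (x i₁) - log (y i₁) - (log (x i₂) - log (y i₂)) := by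
    rw [dH, ← hi₁, ← hi₂, hlog, hlog]
  refine ⟨fun h i j => le_trans ?_ h, fun h => hdH ▸ h i₁ i₂⟩
  have hmax : log (x i / y i) ≤ log (x i₁ / y i₁) :=
    log_le_log (div_pos (hx i) (hy i)) (hi₁ ▸ Finite.le_ciSup (fun i => x i / y i) i)
  have hmin : log (x i₂ / y i₂) ≤ log (x j / y j) :=
    log_le_log (div_pos (hx i₂) (hy i₂)) (hi₂ ▸ Finite.ciInf_le (fun i => x i / y i) j)
  rw [hlog, hlog] at hmax hmin
  linarith

theorem log_sub_le_dH (hx : ∀ i, 0 < x i) (hy : ∀ i, 0 < y i) (i j : ι) :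
    log (x i) - log (y i) - (log (x j) - log (y j)) ≤ dH x y :=
  (dH_le_iff hx hy).1 le_rfl i j

theorem abs_log_sub_le_dH (hx : ∀ i, 0 < x i) (hy : ∀ i, 0 < y i) (i j : ι) :
    |log (x i) - log (y i) - (log (x j) - log (y j))| ≤ dH x y :=
  abs_le.2 ⟨by linarith [log_sub_le_dH hx hy j i], log_sub_le_dH hx hy i j⟩

theorem dH_nonneg (hx : ∀ i, 0 < x i) (hy : ∀ i, 0 < y i) : 0 ≤ dH x y := by
  simpa using log_sub_le_dH hx hy (Classical.arbitrary ι) (Classical.arbitrary ι)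

theorem dH_comm (hx : ∀ i, 0 < x i) (hy : ∀ i, 0 < y i) : dH x y = dH y x :=
  le_antisymm ((dH_le_iff hx hy).2 fun i j => by linarith [log_sub_le_dH hy hx j i])
    ((dH_le_iff hy hx).2 fun i j => by linarith [log_sub_le_dH hx hy j i])

theorem dH_smul_left {c : ℝ} (hc : 0 < c) (hx : ∀ i, 0 < x i) (hy : ∀ i, 0 < y i) :
    dH (c • x) y = dH x y := by
  have hcx : ∀ i, 0 < (c • x) i := fun i => mul_pos hc (hx i)
  have hlog : ∀ i, log ((c • x) i) = log c + log (x i) :=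
    fun i => log_mul hc.ne' (hx i).ne'
  refine le_antisymm ((dH_le_iff hcx hy).2 fun i j => ?_) ((dH_le_iff hx hy).2 fun i j => ?_)
  · linarith [log_sub_le_dH hx hy i j, hlog i, hlog j]
  · linarith [log_sub_le_dH hcx hy i j, hlog i, hlog j]

theorem dH_smul_right {c : ℝ} (hc : 0 < c) (hx : ∀ i, 0 < x i) (hy : ∀ i, 0 < y i) :
    dH x (c • y) = dH x y := by
  have hcy : ∀ i, 0 < (c • y) i := fun i => mul_pos hc (hy i)
  rw [dH_comm hx hcy, dH_smul_left hc hy hx, dH_comm hy hx]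

theorem dH_triangle (hx : ∀ i, 0 < x i) (hy : ∀ i, 0 < y i) (hz : ∀ i, 0 < z i) :
    dH x z ≤ dH x y + dH y z :=
  (dH_le_iff hx hz).2 fun i j => by linarith [log_sub_le_dH hx hy i j, log_sub_le_dH hy hz i j]

theorem dH_mul_le (hx : ∀ i, 0 < x i) (hy : ∀ i, 0 < y i) (hz : ∀ i, 0 < z i)
    (hw : ∀ i, 0 < w i) : dH (x * z) (y * w) ≤ dH x y + dH z w := by
  refine (dH_le_iff (fun i => mul_pos (hx i) (hz i)) fun i => mul_pos (hy i) (hw i)).2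
    fun i j => ?_
  simp only [log_mul (hx _).ne' (hz _).ne', log_mul (hy _).ne' (hw _).ne']
  linarith [log_sub_le_dH hx hy i j, log_sub_le_dH hz hw i j]

theorem dH_div_le (hx : ∀ i, 0 < x i) (hy : ∀ i, 0 < y i) (hz : ∀ i, 0 < z i)
    (hw : ∀ i, 0 < w i) : dH (x / z) (y / w) ≤ dH x y + dH z w := by
  refine (dH_le_iff (fun i => div_pos (hx i) (hz i)) fun i => div_pos (hy i) (hw i)).2
    fun i j => ?_
  simp only [log_div (hx _).ne' (hz _).ne', log_div (hy _).ne' (hw _).ne']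
  linarith [log_sub_le_dH hx hy i j, log_sub_le_dH hz hw j i]

theorem dH_rpow_le (α : ℝ) (hx : ∀ i, 0 < x i) (hy : ∀ i, 0 < y i) :
    dH (fun i => x i ^ α) (fun i => y i ^ α) ≤ |α| * dH x y := by
  refine (dH_le_iff (fun i => rpow_pos_of_pos (hx i) α) fun i => rpow_pos_of_pos (hy i) α).2
    fun i j => ?_
  simp only [log_rpow (hx _), log_rpow (hy _)]
  calc α * log (x i) - α * log (y i) - (α * log (x j) - α * log (y j))
      = α * (log (x i) - log (y i) - (log (x j) - log (y j))) := by ring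
    _ ≤ |α| * |log (x i) - log (y i) - (log (x j) - log (y j))| := by
      rw [← abs_mul]; exact le_abs_self _
    _ ≤ |α| * dH x y := by gcongr; exact abs_log_sub_le_dH hx hy i j

theorem exists_eq_smul_of_dH_eq_zero (hx : ∀ i, 0 < x i) (hy : ∀ i, 0 < y i)
    (h : dH x y = 0) : ∃ a : ℝ, 0 < a ∧ x = a • y := by
  let i₀ := Classical.arbitrary ι
  refine ⟨exp (log (x i₀) - log (y i₀)), exp_pos _, funext fun i => ?_⟩
  have hle := log_sub_le_dH hx hy i i₀
  have hge := log_sub_le_dH hx hy i₀ i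
  calc x i = exp (log (x i)) := (exp_log (hx i)).symm
    _ = exp (log (x i₀) - log (y i₀)) * exp (log (y i)) := by
      rw [← exp_add]; congr 1; linarith
    _ = _ := by rw [exp_log (hy i)]; rfl

noncomputable def logCoord (i₀ : ι) (x : ι → ℝ) : ι → ℝ := fun i => log (x i) - log (x i₀)

theorem dist_logCoord_le_dH (i₀ : ι) (hx : ∀ i, 0 < x i) (hy : ∀ i, 0 < y i) :
    dist (logCoord i₀ x) (logCoord i₀ y) ≤ dH x y :=
  (dist_pi_le_iff (dH_nonneg hx hy)).2 fun i => by
    rw [Real.dist_eq, logCoord, logCoord]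
    convert abs_log_sub_le_dH hx hy i i₀ using 2
    ring

theorem dH_exp_le_two_mul_dist_logCoord (i₀ : ι) (hx : ∀ i, 0 < x i) (a : ι → ℝ) :
    dH x (fun i => exp (a i)) ≤ 2 * dist (logCoord i₀ x) a := by
  refine (dH_le_iff hx fun i => exp_pos (a i)).2 fun i j => ?_
  have hi := abs_le.1 ((Real.dist_eq _ _).symm.trans_le (dist_le_pi_dist (logCoord i₀ x) a i))
  have hj := abs_le.1 ((Real.dist_eq _ _).symm.trans_le (dist_le_pi_dist (logCoord i₀ x) a j))
  simp only [logCoord, log_exp] at hi hj ⊢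
  linarith [hi.2, hj.1]

theorem exists_tendsto_dH_of_dH_succ_le_geometric {u : ℕ → ι → ℝ} {C κ : ℝ}
    (hu : ∀ n i, 0 < u n i) (hκ : κ < 1) (h : ∀ n, dH (u n) (u (n + 1)) ≤ C * κ ^ n) :
    ∃ v : ι → ℝ, (∀ i, 0 < v i) ∧ Tendsto (fun n => dH (u n) v) atTop (𝓝 0) := by
  let i₀ := Classical.arbitrary ι
  have hcauchy : CauchySeq fun n => logCoord i₀ (u n) :=
    cauchySeq_of_le_geometric κ C hκ fun n =>
      (dist_logCoord_le_dH i₀ (hu n) (hu (n + 1))).trans (h n)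
  obtain ⟨L, hL⟩ := cauchySeq_tendsto_of_complete hcauchy
  refine ⟨fun i => exp (L i), fun i => exp_pos _, ?_⟩
  refine squeeze_zero (fun n => dH_nonneg (hu n) fun i => exp_pos _)
    (fun n => dH_exp_le_two_mul_dist_logCoord i₀ (hu n) L) ?_
  simpa using (tendsto_iff_dist_tendsto_zero.1 hL).const_mul 2

end HilbertMetric

section Contraction

variable {ι : Type*} {F : (ι → ℝ) → ι → ℝ} {κ : ℝ}

theorem iterate_pos (hF_pos : ∀ x : ι → ℝ, (∀ i, 0 < x i) → ∀ i, 0 < F x i) {x : ι → ℝ}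
    (hx : ∀ i, 0 < x i) (n : ℕ) : ∀ i, 0 < F^[n] x i :=
  Set.MapsTo.iterate (s := {x : ι → ℝ | ∀ i, 0 < x i}) (fun x hx => hF_pos x hx) n hx

variable [Fintype ι] [Nonempty ι]

theorem dH_iterate_le (hF_pos : ∀ x : ι → ℝ, (∀ i, 0 < x i) → ∀ i, 0 < F x i)
    (hF : ∀ x y : ι → ℝ, (∀ i, 0 < x i) → (∀ i, 0 < y i) → dH (F x) (F y) ≤ κ * dH x y)
    (hκ : 0 ≤ κ) {x y : ι → ℝ} (hx : ∀ i, 0 < x i) (hy : ∀ i, 0 < y i)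
    (n : ℕ) : dH (F^[n] x) (F^[n] y) ≤ κ ^ n * dH x y := by
  induction n with
  | zero => simp
  | succ n ih =>
    rw [Function.iterate_succ_apply', Function.iterate_succ_apply', pow_succ', mul_assoc]
    exact (hF _ _ (iterate_pos hF_pos hx n) (iterate_pos hF_pos hy n)).trans
      (mul_le_mul_of_nonneg_left ih hκ)

theorem dH_iterate_le_of_eigenvector (hF_pos : ∀ x : ι → ℝ, (∀ i, 0 < x i) → ∀ i, 0 < F x i)
    (hF : ∀ x y : ι → ℝ, (∀ i, 0 < x i) → (∀ i, 0 < y i) → dH (F x) (F y) ≤ κ * dH x y)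
    (hκ : 0 ≤ κ) {u x : ι → ℝ} {c : ℝ} (hu : ∀ i, 0 < u i)
    (hc : 0 < c) (hFu : F u = c • u) (hx : ∀ i, 0 < x i) (n : ℕ) :
    dH (F^[n] x) u ≤ κ ^ n * dH x u := by
  induction n with
  | zero => simp
  | succ n ih =>
    have hxn := iterate_pos hF_pos hx n
    calc dH (F^[n + 1] x) u = dH (F (F^[n] x)) (F u) := by
          rw [Function.iterate_succ_apply', hFu, dH_smul_right hc (hF_pos _ hxn) hu]
      _ ≤ κ * dH (F^[n] x) u := hF _ _ hxn hu
      _ ≤ κ ^ (n + 1) * dH x u := by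
          rw [pow_succ', mul_assoc]; exact mul_le_mul_of_nonneg_left ih hκ

theorem eigenvector_unique_of_dH_contraction
    (hF : ∀ x y : ι → ℝ, (∀ i, 0 < x i) → (∀ i, 0 < y i) → dH (F x) (F y) ≤ κ * dH x y)
    (hκ : κ < 1) {u w : ι → ℝ} {c c' : ℝ}
    (hu : ∀ i, 0 < u i) (hc : 0 < c) (hFu : F u = c • u)
    (hw : ∀ i, 0 < w i) (hc' : 0 < c') (hFw : F w = c' • w) :
    ∃ a : ℝ, 0 < a ∧ w = a • u := by
  have hcu : ∀ i, 0 < (c • u) i := fun i => mul_pos hc (hu i)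
  have hle : dH w u ≤ κ * dH w u :=
    calc dH w u = dH (F w) (F u) := by
          rw [hFu, hFw, dH_smul_left hc' hw hcu, dH_smul_right hc hw hu]
      _ ≤ κ * dH w u := hF w u hw hu
  exact exists_eq_smul_of_dH_eq_zero hw hu (by nlinarith [dH_nonneg hw hu])

theorem exists_eigenvector_of_dH_contraction (hF_pos : ∀ x : ι → ℝ, (∀ i, 0 < x i) → ∀ i, 0 < F x i)
    (hF : ∀ x y : ι → ℝ, (∀ i, 0 < x i) → (∀ i, 0 < y i) → dH (F x) (F y) ≤ κ * dH x y)
    (hκ₀ : 0 ≤ κ) (hκ₁ : κ < 1) :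
    ∃ (u : ι → ℝ) (c : ℝ), (∀ i, 0 < u i) ∧ 0 < c ∧ F u = c • u := by
  let x₀ : ι → ℝ := fun _ => 1
  have hx₀ : ∀ i, 0 < x₀ i := fun _ => one_pos
  have hx : ∀ n, ∀ i, 0 < F^[n] x₀ i := iterate_pos hF_pos hx₀
  obtain ⟨v, hv, hlim⟩ := exists_tendsto_dH_of_dH_succ_le_geometric hx hκ₁ fun n => by
    rw [mul_comm, Function.iterate_succ_apply]
    exact dH_iterate_le hF_pos hF hκ₀ hx₀ (hF_pos x₀ hx₀) n
  have hbound : ∀ n, dH (F v) v ≤ κ * dH (F^[n] x₀) v + dH (F^[n + 1] x₀) v := fun n =>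
    calc dH (F v) v ≤ dH (F^[n + 1] x₀) (F v) + dH (F^[n + 1] x₀) v := by
          rw [← dH_comm (hF_pos v hv) (hx (n + 1))]; exact dH_triangle (hF_pos v hv) (hx _) hv
      _ ≤ κ * dH (F^[n] x₀) v + dH (F^[n + 1] x₀) v := by
          rw [Function.iterate_succ_apply']; gcongr; exact hF _ _ (hx n) hv
  have hFv : dH (F v) v ≤ 0 := ge_of_tendsto'
    (by simpa using (hlim.const_mul κ).add (hlim.comp (tendsto_add_atTop_nat 1))) hbound
  obtain ⟨c, hc, hFvc⟩ := exists_eq_smul_of_dH_eq_zero (hF_pos v hv) hv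
    (le_antisymm hFv (dH_nonneg (hF_pos v hv) hv))
  exact ⟨v, c, hv, hc, hFvc⟩

end Contraction

section EVE

variable {ι : Type*} [Fintype ι] {M : ι → ι → ℝ} {β : ℝ}

theorem eveS_pos [Nonempty ι] (hM : ∀ i j, 0 < M i j) {u : ι → ℝ} (hu : ∀ i, 0 < u i) (i : ι) :
    0 < eveS M u i :=
  sum_pos (fun k _ => mul_pos (hu k) (hM k i)) univ_nonempty

noncomputable def eveWeight (M : ι → ι → ℝ) (β : ℝ) (u : ι → ℝ) : ι → ℝ :=
  fun i => u i ^ (-1 / β) * eveS M u i ^ ((1 - β) / β)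

theorem eveT_eq (u : ι → ℝ) :
    eveT M β u =
      fun j => (eveS M u j ^ (1 / β) / ∑ i, M j i * eveWeight M β u i) ^ (β / (1 + β)) := by
  funext j
  simp only [eveT, eveWeight, mul_assoc]

variable [Nonempty ι]

theorem eveWeight_pos (hM : ∀ i j, 0 < M i j) {u : ι → ℝ} (hu : ∀ i, 0 < u i) (i : ι) :
    0 < eveWeight M β u i :=
  mul_pos (rpow_pos_of_pos (hu i) _) (rpow_pos_of_pos (eveS_pos hM hu i) _)

theorem eveT_pos (hM : ∀ i j, 0 < M i j) {u : ι → ℝ} (hu : ∀ i, 0 < u i) (j : ι) :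
    0 < eveT M β u j := by
  rw [eveT_eq]
  exact rpow_pos_of_pos (div_pos (rpow_pos_of_pos (eveS_pos hM hu j) _)
    (sum_pos (fun i _ => mul_pos (hM j i) (eveWeight_pos hM hu i)) univ_nonempty)) _

theorem dH_eveWeight_le (hM : ∀ i j, 0 < M i j) (hβ : 1 ≤ β) {x y : ι → ℝ}
    (hx : ∀ i, 0 < x i) (hy : ∀ i, 0 < y i) :
    dH (eveWeight M β x) (eveWeight M β y) ≤
      (dH x y + (β - 1) * dH (eveS M x) (eveS M y)) / β := by
  have hβ₀ : 0 < β := by linarith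
  calc dH (eveWeight M β x) (eveWeight M β y)
      ≤ dH (fun i => x i ^ (-1 / β)) (fun i => y i ^ (-1 / β)) +
          dH (fun i => eveS M x i ^ ((1 - β) / β)) (fun i => eveS M y i ^ ((1 - β) / β)) :=
        dH_mul_le (fun i => rpow_pos_of_pos (hx i) _) (fun i => rpow_pos_of_pos (hy i) _)
          (fun i => rpow_pos_of_pos (eveS_pos hM hx i) _)
          (fun i => rpow_pos_of_pos (eveS_pos hM hy i) _)
    _ ≤ |-1 / β| * dH x y + |(1 - β) / β| * dH (eveS M x) (eveS M y) :=
        add_le_add (dH_rpow_le _ hx hy) (dH_rpow_le _ (eveS_pos hM hx) (eveS_pos hM hy))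
    _ = (dH x y + (β - 1) * dH (eveS M x) (eveS M y)) / β := by
        rw [abs_of_nonpos (by rw [neg_div]; exact neg_nonpos.2 (by positivity)),
          abs_of_nonpos (div_nonpos_of_nonpos_of_nonneg (by linarith) hβ₀.le)]
        field_simp
        ring

theorem dH_eveT_le (hM : ∀ i j, 0 < M i j) (hβ : 1 ≤ β) {τ : ℝ} (hτ : 0 ≤ τ)
    (hS : ∀ x y : ι → ℝ, (∀ i, 0 < x i) → (∀ i, 0 < y i) →
      dH (eveS M x) (eveS M y) ≤ τ * dH x y)
    (hMap : ∀ x y : ι → ℝ, (∀ i, 0 < x i) → (∀ i, 0 < y i) →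
      dH (fun j => ∑ i, M j i * x i) (fun j => ∑ i, M j i * y i) ≤ τ * dH x y)
    {x y : ι → ℝ} (hx : ∀ i, 0 < x i) (hy : ∀ i, 0 < y i) :
    dH (eveT M β x) (eveT M β y) ≤ (2 * τ + τ ^ 2 * (β - 1)) / (1 + β) * dH x y := by
  have hβ₀ : 0 < β := by linarith
  set d := dH x y
  set e := dH (eveS M x) (eveS M y)
  have hSx := eveS_pos hM hx
  have hSy := eveS_pos hM hy
  have hMx : ∀ j, 0 < ∑ i, M j i * eveWeight M β x i :=
    fun j => sum_pos (fun i _ => mul_pos (hM j i) (eveWeight_pos hM hx i)) univ_nonempty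
  have hMy : ∀ j, 0 < ∑ i, M j i * eveWeight M β y i :=
    fun j => sum_pos (fun i _ => mul_pos (hM j i) (eveWeight_pos hM hy i)) univ_nonempty
  have hden : dH (fun j => ∑ i, M j i * eveWeight M β x i)
      (fun j => ∑ i, M j i * eveWeight M β y i) ≤ τ * ((d + (β - 1) * e) / β) :=
    (hMap _ _ (eveWeight_pos hM hx) (eveWeight_pos hM hy)).trans
      (mul_le_mul_of_nonneg_left (dH_eveWeight_le hM hβ hx hy) hτ)
  have hfrac : dH (fun j => eveS M x j ^ (1 / β) / ∑ i, M j i * eveWeight M β x i)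
      (fun j => eveS M y j ^ (1 / β) / ∑ i, M j i * eveWeight M β y i) ≤
      e / β + τ * ((d + (β - 1) * e) / β) := by
    refine (dH_div_le (fun j => rpow_pos_of_pos (hSx j) _) (fun j => rpow_pos_of_pos (hSy j) _)
      hMx hMy).trans (add_le_add ((dH_rpow_le _ hSx hSy).trans_eq ?_) hden)
    rw [abs_of_pos (one_div_pos.2 hβ₀)]
    ring
  have hT : dH (eveT M β x) (eveT M β y) ≤ (e * (1 + τ * (β - 1)) + τ * d) / (1 + β) := by
    rw [eveT_eq, eveT_eq]
    refine (dH_rpow_le _ (fun j => div_pos (rpow_pos_of_pos (hSx j) _) (hMx j))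
      (fun j => div_pos (rpow_pos_of_pos (hSy j) _) (hMy j))).trans ?_
    rw [abs_of_pos (by positivity)]
    calc β / (1 + β) * dH _ _ ≤ β / (1 + β) * (e / β + τ * ((d + (β - 1) * e) / β)) := by
          gcongr
      _ = (e * (1 + τ * (β - 1)) + τ * d) / (1 + β) := by field_simp; ring
  refine hT.trans ?_
  rw [div_mul_eq_mul_div]
  gcongr
  nlinarith [hS x y hx hy, mul_nonneg hτ (sub_nonneg.2 hβ), dH_nonneg hx hy]

end EVE

/-- if both `S` and `u ↦ M u` are `τ`-contractions (with `0 ≤ τ < 1`) in the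
Hilbert projective metric, then the EVE operator `T` has a strictly positive projective fixed
point `u*` (i.e. `T u* = c • u*` for some `c > 0`), unique up to multiplication by a positive
scalar, and the iterates of `T` converge linearly to `u*` in the Hilbert projective metric with
rate `(2τ + τ²(β-1))/(1+β)`. -/
theorem eveT_unique_fixed_point_and_linear_convergence {ι : Type*} [Fintype ι] [Nonempty ι]
    (M : ι → ι → ℝ) (hM : ∀ i j, 0 < M i j)
    (β : ℝ) (hβ : 1 ≤ β) (τ : ℝ) (hτ0 : 0 ≤ τ) (hτ1 : τ < 1)
    (hS : ∀ x y : ι → ℝ, (∀ i, 0 < x i) → (∀ i, 0 < y i) →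
      dH (eveS M x) (eveS M y) ≤ τ * dH x y)
    (hMap : ∀ x y : ι → ℝ, (∀ i, 0 < x i) → (∀ i, 0 < y i) →
      dH (fun j => ∑ i, M j i * x i) (fun j => ∑ i, M j i * y i) ≤ τ * dH x y) :
    ∃ (ustar : ι → ℝ) (c : ℝ), (∀ i, 0 < ustar i) ∧ 0 < c ∧
      eveT M β ustar = c • ustar ∧
      (∀ w : ι → ℝ, (∀ i, 0 < w i) →
        (∃ c' : ℝ, 0 < c' ∧ eveT M β w = c' • w) → ∃ a : ℝ, 0 < a ∧ w = a • ustar) ∧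
      (∀ x : ι → ℝ, (∀ i, 0 < x i) → ∀ n : ℕ,
        dH ((eveT M β)^[n] x) ustar ≤
          ((2 * τ + τ ^ 2 * (β - 1)) / (1 + β)) ^ n * dH x ustar) := by
  have hκ₀ : 0 ≤ (2 * τ + τ ^ 2 * (β - 1)) / (1 + β) := by
    have : 0 ≤ τ ^ 2 * (β - 1) := mul_nonneg (sq_nonneg τ) (by linarith)
    positivity
  have hκ₁ : (2 * τ + τ ^ 2 * (β - 1)) / (1 + β) < 1 := by
    rw [div_lt_one (by linarith)]
    nlinarith [mul_nonneg (mul_nonneg hτ0 (sub_nonneg.2 hτ1.le)) (sub_nonneg.2 hβ)]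
  have hT_pos : ∀ x : ι → ℝ, (∀ i, 0 < x i) → ∀ i, 0 < eveT M β x i :=
    fun x hx => eveT_pos hM hx
  have hT : ∀ x y : ι → ℝ, (∀ i, 0 < x i) → (∀ i, 0 < y i) → dH (eveT M β x) (eveT M β y) ≤
      (2 * τ + τ ^ 2 * (β - 1)) / (1 + β) * dH x y :=
    fun x y hx hy => dH_eveT_le hM hβ hτ0 hS hMap hx hy
  obtain ⟨u, c, hu, hc, hTu⟩ := exists_eigenvector_of_dH_contraction hT_pos hT hκ₀ hκ₁
  exact ⟨u, c, hu, hc, hTu, fun w hw ⟨c', hc', hTw⟩ =>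
    eigenvector_unique_of_dH_contraction hT hκ₁ hu hc hTu hw hc' hTw,
    fun x hx n => dH_iterate_le_of_eigenvector hT_pos hT hκ₀ hu hc hTu hx n⟩
end

section
/- Let ι be a finite nonempty index type and let M : ι → ι → ℝ have all entries strictly positive. Define the projective diameter Δ(M) = sup over strictly positive x, y : ι → ℝ of d_H(M x, M y), where (M x)_j = ∑_i M_{j i} · x_i. Then Δ(M) is finite, and for all strictly positive x, y, the Birkhoff–Hopf contraction estimate holds: d_H(M x, M y) ≤ tanh( Δ(M) / 4 ) · d_H(x, y). -/
/-!
Write `x = a p + b q` and `y = p + q` with `p, q > 0`, where `a < x / y < b` coordinatewise.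
With `P = M p`, `Q = M q` and `r = Q / P`, every ratio of `M x` to `M y` equals
`(a + b r) / (1 + r)`, which increases with `r`; so `d_H(M x, M y)` is controlled by the extreme
values `t ≤ T` of `r`, while `log (T / t) = d_H(M q, M p) ≤ Δ(M)`. The remaining two-variable
inequality
  `log ((a + b T) (1 + t) / ((a + b t) (1 + T))) ≤ tanh (log (T / t) / 4) · log (b / a)`
holds because, with `T = τ²` and `t = σ²`, the function
`w ↦ log (a + w τ²) - log (a + w σ²) - (τ - σ) / (τ + σ) · log w` is decreasing on `w > 0`: its
derivative is a nonpositive multiple of `(a - w σ τ)²`. Letting `a` and `b` tend to the extreme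
ratios of `x / y` gives the estimate. `Δ(M)` is finite because every `(M x)_j` lies between
`(min M) ∑ x` and `(max M) ∑ x`.
-/

open Finset Real

/-- The set of Hilbert projective distances `d_H(M x, M y)` over strictly positive `x, y`,
where `(M x) j = ∑ i, M j i * x i`. Its supremum is the projective diameter `Δ(M)`. -/
def projDiamSet {ι : Type*} [Fintype ι] [Nonempty ι] (M : ι → ι → ℝ) : Set ℝ :=
  {d : ℝ | ∃ x y : ι → ℝ, (∀ i, 0 < x i) ∧ (∀ i, 0 < y i) ∧
    d = dH (fun j => ∑ i, M j i * x i) (fun j => ∑ i, M j i * y i)}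

open Matrix

lemma Real.tanh_le_tanh {a b : ℝ} (h : a ≤ b) : tanh a ≤ tanh b := by
  rwa [← artanh_le_artanh_iff ⟨neg_one_lt_tanh a, tanh_lt_one a⟩
    ⟨neg_one_lt_tanh b, tanh_lt_one b⟩, artanh_tanh, artanh_tanh]

lemma Real.tanh_half_log_sub_log {σ τ : ℝ} (hσ : 0 < σ) (hτ : 0 < τ) :
    tanh ((log τ - log σ) / 2) = (τ - σ) / (τ + σ) := by
  have hκ : (τ - σ) / (τ + σ) ∈ Set.Ioo (-1 : ℝ) 1 := by
    constructor
    · rw [lt_div_iff₀ (by positivity)]; linarith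
    · rw [div_lt_iff₀ (by positivity)]; linarith
  rw [← tanh_artanh hκ, artanh_eq_half_log (Set.Ioo_subset_Icc_self hκ)]
  have hratio : (1 + (τ - σ) / (τ + σ)) / (1 - (τ - σ) / (τ + σ)) = τ / σ := by
    have : τ + σ ≠ 0 := by positivity
    rw [div_eq_div_iff (sub_pos.2 hκ.2).ne' hσ.ne']
    field_simp
    ring
  rw [hratio, log_div hτ.ne' hσ.ne']
  congr 1
  ring

lemma antitoneOn_log_add_sub_log_add_sub_mul_log {a σ τ : ℝ} (ha : 0 < a) (hσ : 0 < σ)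
    (hστ : σ ≤ τ) :
    AntitoneOn (fun w => log (a + w * τ ^ 2) - log (a + w * σ ^ 2) -
      (τ - σ) / (τ + σ) * log w) (Set.Ioi 0) := by
  have hτ : 0 < τ := hσ.trans_le hστ
  have hderiv : ∀ w ∈ Set.Ioi (0 : ℝ), HasDerivAt (fun w => log (a + w * τ ^ 2) -
      log (a + w * σ ^ 2) - (τ - σ) / (τ + σ) * log w)
      (-(τ - σ) * (a - w * σ * τ) ^ 2 /
        ((τ + σ) * w * (a + w * τ ^ 2) * (a + w * σ ^ 2))) w := by
    intro w (hw : 0 < w)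
    have hA : 0 < a + w * τ ^ 2 := by positivity
    have hB : 0 < a + w * σ ^ 2 := by positivity
    have hlogA := (((hasDerivAt_id w).mul_const (τ ^ 2)).const_add a).log hA.ne'
    have hlogB := (((hasDerivAt_id w).mul_const (σ ^ 2)).const_add a).log hB.ne'
    refine ((hlogA.sub hlogB).sub
      ((hasDerivAt_log hw.ne').const_mul ((τ - σ) / (τ + σ)))).congr_deriv ?_
    have : τ + σ ≠ 0 := by positivity
    simp only [id, one_mul]
    field_simp
    ring
  refine antitoneOn_of_deriv_nonpos (convex_Ioi 0)
    (fun w hw => (hderiv w hw).continuousAt.continuousWithinAt) ?_ ?_ <;> rw [interior_Ioi]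
  · exact fun w hw => (hderiv w hw).differentiableAt.differentiableWithinAt
  · intro w (hw : 0 < w)
    rw [(hderiv w hw).deriv]
    have : 0 ≤ τ - σ := sub_nonneg.2 hστ
    apply div_nonpos_of_nonpos_of_nonneg (by nlinarith [sq_nonneg (a - w * σ * τ)])
    positivity

lemma log_div_sub_log_div_le_tanh_mul {a b t T : ℝ} (ha : 0 < a) (hab : a ≤ b) (ht : 0 < t)
    (htT : t ≤ T) :
    log ((a + b * T) / (1 + T)) - log ((a + b * t) / (1 + t)) ≤
      tanh ((log T - log t) / 4) * (log b - log a) := by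
  obtain ⟨σ, hσ, rfl⟩ : ∃ σ, 0 < σ ∧ t = σ ^ 2 := ⟨√t, sqrt_pos.2 ht, (sq_sqrt ht.le).symm⟩
  obtain ⟨τ, hτ, rfl⟩ : ∃ τ, 0 < τ ∧ T = τ ^ 2 :=
    ⟨√T, sqrt_pos.2 (ht.trans_le htT), (sq_sqrt (ht.trans_le htT).le).symm⟩
  have hστ : σ ≤ τ := (sq_le_sq₀ hσ.le hτ.le).1 htT
  have hb : 0 < b := ha.trans_le hab
  have hG := antitoneOn_log_add_sub_log_add_sub_mul_log ha hσ hστ ha hb hab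
  simp only [← mul_one_add a] at hG
  rw [log_mul ha.ne' (by positivity), log_mul ha.ne' (by positivity)] at hG
  have hquarter : (log (τ ^ 2) - log (σ ^ 2)) / 4 = (log τ - log σ) / 2 := by
    rw [log_pow, log_pow]
    push_cast
    ring
  rw [log_div (by positivity) (by positivity), log_div (by positivity) (by positivity), hquarter,
    tanh_half_log_sub_log hσ hτ]
  linarith

section HilbertMetric

variable {ι : Type*} [Fintype ι] [Nonempty ι]

lemma iInf_div_pos {x y : ι → ℝ} (hx : ∀ i, 0 < x i) (hy : ∀ i, 0 < y i) :
    0 < ⨅ i, x i / y i := by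
  obtain ⟨i, hi⟩ := exists_eq_ciInf_of_finite (f := fun i => x i / y i)
  exact hi ▸ div_pos (hx i) (hy i)

lemma dH_le_log_sub_log {x y : ι → ℝ} {a b : ℝ} (ha : 0 < a)
    (h : ∀ i, x i / y i ∈ Set.Icc a b) : dH x y ≤ log b - log a := by
  have hinf : a ≤ ⨅ i, x i / y i := le_ciInf fun i => (h i).1
  have hsup : a ≤ ⨆ i, x i / y i :=
    hinf.trans (ciInf_le_ciSup (Finite.bddBelow_range _) (Finite.bddAbove_range _))
  exact sub_le_sub (log_le_log (ha.trans_le hsup) (ciSup_le fun i => (h i).2))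
    (log_le_log ha hinf)

lemma dH_smul_add_smul_le {P Q : ι → ℝ} (hP : ∀ i, 0 < P i) (hQ : ∀ i, 0 < Q i) {a b : ℝ}
    (ha : 0 < a) (hab : a ≤ b) :
    dH (a • P + b • Q) (P + Q) ≤ tanh (dH Q P / 4) * (log b - log a) := by
  set t := ⨅ j, Q j / P j
  set T := ⨆ j, Q j / P j
  have ht : 0 < t := iInf_div_pos hQ hP
  have htr : ∀ j, t ≤ Q j / P j := ciInf_le (Finite.bddBelow_range _)
  have hrT : ∀ j, Q j / P j ≤ T := le_ciSup (Finite.bddAbove_range fun j => Q j / P j)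
  have hb : 0 < b := ha.trans_le hab
  set g : ℝ → ℝ := fun r => (a + b * r) / (1 + r)
  have hg_mono : ∀ u v, 0 ≤ u → u ≤ v → g u ≤ g v := by
    intro u v hu huv
    rw [div_le_div_iff₀ (by positivity) (by linarith)]
    nlinarith
  have hratio : ∀ j, (a • P + b • Q) j / (P + Q) j = g (Q j / P j) := by
    intro j
    have := (hP j).ne'
    simp only [g, Pi.add_apply, Pi.smul_apply, smul_eq_mul]
    field_simp
  calc dH (a • P + b • Q) (P + Q) ≤ log (g T) - log (g t) := by
        refine dH_le_log_sub_log (show 0 < g t by positivity) fun j => ?_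
        rw [hratio]
        exact ⟨hg_mono _ _ ht.le (htr j), hg_mono _ _ (ht.le.trans (htr j)) (hrT j)⟩
    _ ≤ tanh ((log T - log t) / 4) * (log b - log a) :=
        log_div_sub_log_div_le_tanh_mul ha hab ht ((htr (Classical.arbitrary ι)).trans (hrT _))
    _ = tanh (dH Q P / 4) * (log b - log a) := rfl

end HilbertMetric

lemma exists_pos_smul_add_smul_eq {ι : Type*} [Nonempty ι] {x y : ι → ℝ} (hy : ∀ i, 0 < y i)
    {a b : ℝ} (h : ∀ i, x i / y i ∈ Set.Ioo a b) :
    ∃ p q : ι → ℝ, (∀ i, 0 < p i) ∧ (∀ i, 0 < q i) ∧ x = a • p + b • q ∧ y = p + q := by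
  have hab : 0 < b - a := sub_pos.2 ((h (Classical.arbitrary ι)).1.trans (h _).2)
  refine ⟨(b - a)⁻¹ • (b • y - x), (b - a)⁻¹ • (x - a • y), fun i => ?_, fun i => ?_, ?_, ?_⟩
  · have := (div_lt_iff₀ (hy i)).1 (h i).2
    simp only [Pi.smul_apply, Pi.sub_apply, smul_eq_mul]
    exact mul_pos (inv_pos.2 hab) (by linarith)
  · have := (lt_div_iff₀ (hy i)).1 (h i).1
    simp only [Pi.smul_apply, Pi.sub_apply, smul_eq_mul]
    exact mul_pos (inv_pos.2 hab) (by linarith)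
  all_goals
    ext i
    simp only [Pi.add_apply, Pi.smul_apply, Pi.sub_apply, smul_eq_mul]
    field_simp
    ring

lemma mulVec_mem_Icc {ι : Type*} [Fintype ι] {M : Matrix ι ι ℝ} {m K : ℝ}
    (hm : ∀ i j, m ≤ M i j) (hK : ∀ i j, M i j ≤ K) {x : ι → ℝ} (hx : ∀ i, 0 ≤ x i) (j : ι) :
    (M *ᵥ x) j ∈ Set.Icc (m * ∑ i, x i) (K * ∑ i, x i) := by
  simp only [mulVec, dotProduct, Finset.mul_sum]
  exact ⟨Finset.sum_le_sum fun i _ => mul_le_mul_of_nonneg_right (hm j i) (hx i),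
    Finset.sum_le_sum fun i _ => mul_le_mul_of_nonneg_right (hK j i) (hx i)⟩

section PositiveMatrix

variable {ι : Type*} [Fintype ι] [Nonempty ι] {M : Matrix ι ι ℝ}

lemma mulVec_pos (hM : ∀ i j, 0 < M i j) {x : ι → ℝ} (hx : ∀ i, 0 < x i) (j : ι) :
    0 < (M *ᵥ x) j :=
  Finset.sum_pos (fun i _ => mul_pos (hM j i) (hx i)) Finset.univ_nonempty

lemma bddAbove_projDiamSet (hM : ∀ i j, 0 < M i j) : BddAbove (projDiamSet M) := by
  obtain ⟨⟨i₀, j₀⟩, hmin⟩ := Finite.exists_min fun p : ι × ι => M p.1 p.2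
  obtain ⟨⟨i₁, j₁⟩, hmax⟩ := Finite.exists_max fun p : ι × ι => M p.1 p.2
  set m := M i₀ j₀
  set K := M i₁ j₁
  have hm : 0 < m := hM i₀ j₀
  have hK : 0 < K := hM i₁ j₁
  refine ⟨log ((K / m) ^ 2), ?_⟩
  rintro _ ⟨x, y, hx, hy, rfl⟩
  have hSx : 0 < ∑ i, x i := Finset.sum_pos (fun i _ => hx i) Finset.univ_nonempty
  have hSy : 0 < ∑ i, y i := Finset.sum_pos (fun i _ => hy i) Finset.univ_nonempty
  have hMx := mulVec_mem_Icc (M := M) (fun i j => hmin (i, j)) (fun i j => hmax (i, j))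
    fun i => (hx i).le
  have hMy := mulVec_mem_Icc (M := M) (fun i j => hmin (i, j)) (fun i j => hmax (i, j))
    fun i => (hy i).le
  calc dH (M *ᵥ x) (M *ᵥ y)
      ≤ log ((K * ∑ i, x i) / (m * ∑ i, y i)) - log ((m * ∑ i, x i) / (K * ∑ i, y i)) := by
        refine dH_le_log_sub_log (by positivity) fun j => ⟨?_, ?_⟩
        · exact div_le_div₀ (mulVec_pos hM hx j).le (hMx j).1 (mulVec_pos hM hy j) (hMy j).2
        · exact div_le_div₀ (by positivity) (hMx j).2 (by positivity) (hMy j).1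
    _ = log ((K / m) ^ 2) := by
        rw [← log_div (by positivity) (by positivity)]
        congr 1
        field_simp

lemma dH_mulVec_le_of_forall_div_mem_Ioo (hM : ∀ i j, 0 < M i j) {Δ : ℝ}
    (hΔ : Δ ∈ upperBounds (projDiamSet M)) {x y : ι → ℝ} (hy : ∀ i, 0 < y i) {a b : ℝ}
    (ha : 0 < a) (h : ∀ i, x i / y i ∈ Set.Ioo a b) :
    dH (M *ᵥ x) (M *ᵥ y) ≤ tanh (Δ / 4) * (log b - log a) := by
  have hab : a ≤ b := ((h (Classical.arbitrary ι)).1.trans (h _).2).le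
  obtain ⟨p, q, hp, hq, rfl, rfl⟩ := exists_pos_smul_add_smul_eq hy h
  rw [mulVec_add, mulVec_add, mulVec_smul, mulVec_smul]
  calc dH (a • M *ᵥ p + b • M *ᵥ q) (M *ᵥ p + M *ᵥ q)
      ≤ tanh (dH (M *ᵥ q) (M *ᵥ p) / 4) * (log b - log a) :=
        dH_smul_add_smul_le (mulVec_pos hM hp) (mulVec_pos hM hq) ha hab
    _ ≤ tanh (Δ / 4) * (log b - log a) := by
        have : dH (M *ᵥ q) (M *ᵥ p) ≤ Δ := hΔ ⟨q, p, hq, hp, rfl⟩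
        exact mul_le_mul_of_nonneg_right (tanh_le_tanh (by linarith))
          (sub_nonneg.2 (log_le_log ha hab))

lemma dH_mulVec_le (hM : ∀ i j, 0 < M i j) {Δ : ℝ} (hΔ : Δ ∈ upperBounds (projDiamSet M))
    {x y : ι → ℝ} (hx : ∀ i, 0 < x i) (hy : ∀ i, 0 < y i) :
    dH (M *ᵥ x) (M *ᵥ y) ≤ tanh (Δ / 4) * dH x y := by
  refine le_of_forall_pos_le_add fun ε hε => ?_
  set α := ⨅ i, x i / y i
  set β := ⨆ i, x i / y i
  have hα : 0 < α := iInf_div_pos hx hy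
  have hαr : ∀ i, α ≤ x i / y i := ciInf_le (Finite.bddBelow_range _)
  have hrβ : ∀ i, x i / y i ≤ β := le_ciSup (Finite.bddAbove_range fun i => x i / y i)
  have hβ : 0 < β := hα.trans_le ((hαr (Classical.arbitrary ι)).trans (hrβ _))
  have hwiden : ∀ i, x i / y i ∈ Set.Ioo (α * exp (-(ε / 2))) (β * exp (ε / 2)) := fun i =>
    ⟨(mul_lt_of_lt_one_right hα (exp_lt_one_iff.2 (by linarith))).trans_le (hαr i),
      (hrβ i).trans_lt (lt_mul_of_one_lt_right hβ (one_lt_exp_iff.2 (by linarith)))⟩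
  have hlog : log (β * exp (ε / 2)) - log (α * exp (-(ε / 2))) = dH x y + ε := by
    rw [log_mul hβ.ne' (exp_ne_zero _), log_mul hα.ne' (exp_ne_zero _), log_exp, log_exp, dH]
    ring
  calc dH (M *ᵥ x) (M *ᵥ y) ≤ tanh (Δ / 4) * (dH x y + ε) :=
        hlog ▸ dH_mulVec_le_of_forall_div_mem_Ioo hM hΔ hy (by positivity) hwiden
    _ ≤ tanh (Δ / 4) * dH x y + ε := by nlinarith [tanh_lt_one (Δ / 4)]

end PositiveMatrix

/-- for a matrix `M` with all entries strictly positive, the projective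
diameter `Δ(M) = sup {d_H(M x, M y) : x, y > 0}` is finite (the set of such distances is
bounded above), and the Birkhoff–Hopf contraction estimate holds:
`d_H(M x, M y) ≤ tanh(Δ(M) / 4) * d_H(x, y)` for all strictly positive `x, y`. -/
theorem birkhoff_hopf_contraction {ι : Type*} [Fintype ι] [Nonempty ι]
    (M : ι → ι → ℝ) (hM : ∀ i j, 0 < M i j) :
    BddAbove (projDiamSet M) ∧
      ∀ x y : ι → ℝ, (∀ i, 0 < x i) → (∀ i, 0 < y i) →
        dH (fun j => ∑ i, M j i * x i) (fun j => ∑ i, M j i * y i) ≤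
          Real.tanh (sSup (projDiamSet M) / 4) * dH x y := by
  have hBdd : BddAbove (projDiamSet M) := bddAbove_projDiamSet hM
  exact ⟨hBdd, fun x y hx hy => dH_mulVec_le hM (fun _ hd => le_csSup hBdd hd) hx hy⟩
end
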